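/- Let m, κ be positive integers with 2κ dividing m, let S be a nonempty subset of Fin m, let δ ∈ (0,1], and fix k ∈ {1,…,κ}. Let C_k = {t ∈ Fin m : m/2 + (k−1)·m/(2κ) ≤ t < m/2 + k·m/(2κ)} be the positions of the k-th chunk of the second half. Let σ be a permutation of Fin m drawn uniformly at random and let X_k = |{t ∈ S : σ t ∈ C_k}|. Then the probability that |X_k − |S|/(2κ)| > δ·|S|/(2κ) is at most 2·exp(−|S|·δ²/(6κ)). -/

import Mathlib

/-
The count `X = #{t ∈ S | σ t ∈ D}` is hypergeometric, and its moment generating function is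
dominated by that of the binomial distribution with parameters `#S` and `p = #D / n`:
`𝔼 u ^ X ≤ (1 + (u - 1) p) ^ #S` for all `u > 0`. For `u ≥ 1` expand
`u ^ X = ∑_{T ⊆ S} (u - 1) ^ #T · [σ T ⊆ D]` and use `ℙ(σ T ⊆ D) ≤ p ^ #T`; the latter holds
because adding a point `x ∉ T` multiplies this probability by `(#D - #T) / (n - #T) ≤ p`,
which comes from double counting the pairs `(σ, y)` with `σ T ⊆ D`, `y ∉ T`, `σ y ∈ D`.
For `u < 1` apply the case `u⁻¹ ≥ 1` to the complement `Dᶜ`. The usual Chernoff argument with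
`u = 1 + δ` and `u = exp (-δ)` then bounds both tails by `exp (-μ δ ^ 2 / 3)`, `μ = p · #S`,
and for the `k`-th chunk of the second half `p = 1 / (2κ)`.
-/

open Finset Equiv Real

theorem card_filter_le_apply_le_exp_neg_mul_sum_exp {ι : Type*} (s : Finset ι) (f : ι → ℝ)
    (a : ℝ) : (#{i ∈ s | a ≤ f i} : ℝ) ≤ exp (-a) * ∑ i ∈ s, exp (f i) := by
  calc (#{i ∈ s | a ≤ f i} : ℝ) = ∑ i ∈ s with a ≤ f i, 1 := by simp
    _ ≤ ∑ i ∈ s with a ≤ f i, exp (f i - a) :=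
        sum_le_sum fun i hi => one_le_exp (sub_nonneg.2 (mem_filter.1 hi).2)
    _ ≤ ∑ i ∈ s, exp (f i - a) := sum_le_sum_of_subset_of_nonneg (filter_subset _ _)
        fun i _ _ => (exp_pos _).le
    _ = exp (-a) * ∑ i ∈ s, exp (f i) := by
        rw [mul_sum]; exact sum_congr rfl fun i _ => by rw [← exp_add, neg_add_eq_sub]

theorem exp_neg_le_one_sub_add_sq_div_two {x : ℝ} (hx : 0 ≤ x) : exp (-x) ≤ 1 - x + x ^ 2 / 2 := by
  calc exp (-x) = (exp x)⁻¹ := exp_neg x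
    _ ≤ (1 + x + x ^ 2 / 2)⁻¹ := inv_anti₀ (by positivity) (quadratic_le_exp_of_nonneg hx)
    _ ≤ 1 - x + x ^ 2 / 2 := by
        rw [inv_le_iff_one_le_mul₀ (by positivity)]
        nlinarith [pow_nonneg hx 4]

theorem sub_one_add_mul_log_one_add_le {x : ℝ} (h0 : 0 ≤ x) (h1 : x ≤ 1) :
    x - (1 + x) * log (1 + x) ≤ -x ^ 2 / 3 := by
  calc x - (1 + x) * log (1 + x) ≤ x - (1 + x) * (2 * x / (x + 2)) := by
        gcongr
        exact le_log_one_add_of_nonneg h0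
    _ = -x ^ 2 / (x + 2) := by field_simp; ring
    _ ≤ -x ^ 2 / 3 := by
        rw [neg_div, neg_div, neg_le_neg_iff]
        exact div_le_div_of_nonneg_left (sq_nonneg x) (by positivity) (by linarith)

theorem one_add_pow_card_filter_eq_sum_powerset {ι : Type*} (S : Finset ι) (p : ι → Prop)
    [DecidablePred p] (a : ℝ) :
    (1 + a) ^ #{t ∈ S | p t} = ∑ T ∈ S.powerset, if ∀ t ∈ T, p t then a ^ #T else 0 := by
  rw [← prod_const, prod_filter]
  have hsplit : ∀ t, (if p t then 1 + a else 1) = 1 + if p t then a else 0 := fun t => by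
    split_ifs <;> simp
  simp only [hsplit, prod_one_add, prod_ite_zero, prod_const]

section

variable {α : Type*} [Fintype α] [DecidableEq α]

theorem card_perm_mapsTo_insert_eq {T : Finset α} (D : Finset α) {x y : α} (hx : x ∉ T)
    (hy : y ∉ T) :
    #{σ : Perm α | ∀ t ∈ insert x T, σ t ∈ D} = #{σ : Perm α | ∀ t ∈ insert y T, σ t ∈ D} := by
  refine card_equiv (Equiv.mulRight (swap x y)) fun σ => ?_
  have hfix : ∀ t ∈ T, swap x y t = t := fun t ht =>
    swap_apply_of_ne_of_ne (ne_of_mem_of_not_mem ht hx) (ne_of_mem_of_not_mem ht hy)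
  simp only [mem_filter, mem_univ, true_and, forall_mem_insert, coe_mulRight, Perm.mul_apply,
    swap_apply_right]
  exact and_congr_right fun _ => forall₂_congr fun t ht => by rw [hfix t ht]

theorem card_perm_mapsTo_insert_mul_add {T : Finset α} (D : Finset α) {x : α} (hx : x ∉ T) :
    #{σ : Perm α | ∀ t ∈ insert x T, σ t ∈ D} * #Tᶜ + #{σ : Perm α | ∀ t ∈ T, σ t ∈ D} * #T
      = #{σ : Perm α | ∀ t ∈ T, σ t ∈ D} * #D := by
  set G := ({σ : Perm α | ∀ t ∈ T, σ t ∈ D} : Finset (Perm α))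
  have hfiber : ∀ σ ∈ G, #{y ∈ Tᶜ | σ y ∈ D} + #T = #D := by
    intro σ hσ
    simp only [G, mem_filter, mem_univ, true_and] at hσ
    have hsplit : ({y | σ y ∈ D} : Finset α) = {y ∈ Tᶜ | σ y ∈ D} ∪ T := by
      ext y; by_cases hy : y ∈ T <;> simp [hy, hσ]
    have hcard : #({y | σ y ∈ D} : Finset α) = #D := by
      rw [← card_map σ.toEmbedding]; congr 1; ext y; simp
    rw [← hcard, hsplit, card_union_of_disjoint]
    exact disjoint_left.2 fun y hy hyT => (mem_compl.1 (mem_filter.1 hy).1) hyT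
  have hbelow : ∀ y ∈ Tᶜ, #{σ ∈ G | σ y ∈ D} = #{σ : Perm α | ∀ t ∈ insert x T, σ t ∈ D} := by
    intro y hy
    rw [← card_perm_mapsTo_insert_eq D (mem_compl.1 hy) hx, filter_filter]
    simp only [forall_mem_insert, and_comm]
  calc _ = ∑ y ∈ Tᶜ, #{σ ∈ G | σ y ∈ D} + ∑ σ ∈ G, #T := by
        rw [sum_congr rfl hbelow, sum_const, sum_const, smul_eq_mul, smul_eq_mul, mul_comm]
    _ = ∑ σ ∈ G, (#{y ∈ Tᶜ | σ y ∈ D} + #T) := by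
        have hswap := sum_card_bipartiteAbove_eq_sum_card_bipartiteBelow
          (fun (σ : Perm α) y => σ y ∈ D) (s := G) (t := Tᶜ)
        simp only [bipartiteAbove, bipartiteBelow] at hswap
        rw [sum_add_distrib, hswap]
    _ = #G * #D := by rw [sum_congr rfl hfiber, sum_const, smul_eq_mul]

theorem card_perm_mapsTo_mul_pow_le (T D : Finset α) :
    #{σ : Perm α | ∀ t ∈ T, σ t ∈ D} * Fintype.card α ^ #T
      ≤ (Fintype.card α).factorial * #D ^ #T := by
  induction T using Finset.induction_on with
  | empty => simp [Fintype.card_perm]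
  | insert x T hx ih =>
    set g' := #({σ : Perm α | ∀ t ∈ insert x T, σ t ∈ D} : Finset (Perm α))
    set g := #({σ : Perm α | ∀ t ∈ T, σ t ∈ D} : Finset (Perm α))
    have hmono : g' ≤ g :=
      card_le_card (monotone_filter_right _ fun _ _ h t ht => h t (mem_insert_of_mem ht))
    have hstep : g' * Fintype.card α ≤ g * #D := by
      have := card_perm_mapsTo_insert_mul_add D hx
      rw [← card_compl_add_card T]
      nlinarith
    rw [card_insert_of_notMem hx, pow_succ, pow_succ, ← mul_assoc, mul_right_comm, ← mul_assoc]
    calc g' * Fintype.card α * Fintype.card α ^ #T ≤ g * #D * Fintype.card α ^ #T := by gcongr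
      _ = g * Fintype.card α ^ #T * #D := by ring
      _ ≤ (Fintype.card α).factorial * #D ^ #T * #D := by gcongr

variable [Nonempty α]

theorem sum_perm_pow_card_filter_le_of_one_le (S D : Finset α) {u : ℝ} (hu : 1 ≤ u) :
    ∑ σ : Perm α, u ^ #{t ∈ S | σ t ∈ D}
      ≤ (Fintype.card α).factorial * (1 + (u - 1) * (#D / Fintype.card α)) ^ #S := by
  have hn : (0 : ℝ) < Fintype.card α := by exact_mod_cast Fintype.card_pos
  have hgood : ∀ T : Finset α, (#{σ : Perm α | ∀ t ∈ T, σ t ∈ D} : ℝ)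
      ≤ (Fintype.card α).factorial * (#D / Fintype.card α) ^ #T := by
    intro T
    rw [div_pow, ← mul_div_assoc, le_div_iff₀ (by positivity)]
    exact_mod_cast card_perm_mapsTo_mul_pow_le T D
  calc ∑ σ : Perm α, u ^ #{t ∈ S | σ t ∈ D}
      = ∑ T ∈ S.powerset, (#{σ : Perm α | ∀ t ∈ T, σ t ∈ D} : ℝ) * (u - 1) ^ #T := by
        conv_lhs => enter [2, σ]; rw [← add_sub_cancel 1 u, one_add_pow_card_filter_eq_sum_powerset]
        rw [sum_comm]
        refine sum_congr rfl fun T _ => ?_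
        rw [natCast_card_filter, sum_mul]
        exact sum_congr rfl fun σ _ => by split_ifs <;> simp
    _ ≤ ∑ T ∈ S.powerset,
          (Fintype.card α).factorial * (#D / Fintype.card α) ^ #T * (u - 1) ^ #T := by
        gcongr with T
        exact hgood T
    _ = (Fintype.card α).factorial * (1 + (u - 1) * (#D / Fintype.card α)) ^ #S := by
        rw [add_comm, ← sum_pow_mul_eq_add_pow, mul_sum]
        refine sum_congr rfl fun T _ => ?_
        rw [one_pow, mul_one, mul_pow]
        ring

theorem sum_perm_pow_card_filter_le (S D : Finset α) {u : ℝ} (hu : 0 < u) :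
    ∑ σ : Perm α, u ^ #{t ∈ S | σ t ∈ D}
      ≤ (Fintype.card α).factorial * (1 + (u - 1) * (#D / Fintype.card α)) ^ #S := by
  rcases le_or_gt 1 u with h1 | h1
  · exact sum_perm_pow_card_filter_le_of_one_le S D h1
  have hn : (0 : ℝ) < Fintype.card α := by exact_mod_cast Fintype.card_pos
  have hsplit : ∀ σ : Perm α,
      u ^ #{t ∈ S | σ t ∈ D} = u ^ #S * u⁻¹ ^ #{t ∈ S | σ t ∈ Dᶜ} := by
    intro σ
    simp only [mem_compl]
    rw [← card_filter_add_card_filter_not (s := S) (fun t => σ t ∈ D), pow_add, mul_assoc,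
      ← mul_pow, mul_inv_cancel₀ hu.ne', one_pow, mul_one]
  have hcompl : (#Dᶜ : ℝ) / Fintype.card α = 1 - #D / Fintype.card α := by
    rw [card_compl, Nat.cast_sub (card_le_univ D), sub_div, div_self hn.ne']
  calc ∑ σ : Perm α, u ^ #{t ∈ S | σ t ∈ D}
      = u ^ #S * ∑ σ : Perm α, u⁻¹ ^ #{t ∈ S | σ t ∈ Dᶜ} := by
        rw [mul_sum]; exact sum_congr rfl fun σ _ => hsplit σ
    _ ≤ u ^ #S * ((Fintype.card α).factorial
          * (1 + (u⁻¹ - 1) * (#Dᶜ / Fintype.card α)) ^ #S) := by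
        gcongr
        exact sum_perm_pow_card_filter_le_of_one_le S Dᶜ ((one_le_inv₀ hu).2 h1.le)
    _ = (Fintype.card α).factorial * (1 + (u - 1) * (#D / Fintype.card α)) ^ #S := by
        rw [hcompl, mul_left_comm, ← mul_pow]
        congr 2
        field_simp
        ring

theorem sum_perm_exp_mul_card_filter_le (S D : Finset α) (l : ℝ) :
    ∑ σ : Perm α, exp (l * #{t ∈ S | σ t ∈ D})
      ≤ (Fintype.card α).factorial * exp ((exp l - 1) * (#S * (#D / Fintype.card α))) := by
  have hn : (0 : ℝ) < Fintype.card α := by exact_mod_cast Fintype.card_pos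
  have hp0 : (0 : ℝ) ≤ #D / Fintype.card α := by positivity
  have hp1 : (#D : ℝ) / Fintype.card α ≤ 1 :=
    div_le_one_of_le₀ (by exact_mod_cast card_le_univ D) hn.le
  have hbase : 0 ≤ 1 + (exp l - 1) * (#D / Fintype.card α) := by
    nlinarith [exp_pos l]
  calc ∑ σ : Perm α, exp (l * #{t ∈ S | σ t ∈ D})
      = ∑ σ : Perm α, exp l ^ #{t ∈ S | σ t ∈ D} := by
        simp only [← Real.exp_nat_mul, mul_comm]
    _ ≤ (Fintype.card α).factorial * (1 + (exp l - 1) * (#D / Fintype.card α)) ^ #S :=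
        sum_perm_pow_card_filter_le S D (exp_pos l)
    _ ≤ (Fintype.card α).factorial * exp ((exp l - 1) * (#D / Fintype.card α)) ^ #S := by
        gcongr
        linarith [add_one_le_exp ((exp l - 1) * (#D / Fintype.card α))]
    _ = (Fintype.card α).factorial * exp ((exp l - 1) * (#S * (#D / Fintype.card α))) := by
        rw [← Real.exp_nat_mul]
        ring_nf

theorem card_perm_upper_tail_le (S D : Finset α) {δ : ℝ} (h0 : 0 ≤ δ) (h1 : δ ≤ 1) :
    (#{σ : Perm α | (1 + δ) * (#S * (#D / Fintype.card α)) < #{t ∈ S | σ t ∈ D}} : ℝ)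
      ≤ (Fintype.card α).factorial * exp (-(#S * (#D / Fintype.card α)) * δ ^ 2 / 3) := by
  set μ : ℝ := #S * (#D / Fintype.card α)
  set X : Perm α → ℝ := fun σ => #{t ∈ S | σ t ∈ D}
  have hμ : 0 ≤ μ := by positivity
  set L := log (1 + δ)
  have hL : 0 ≤ L := log_nonneg (by linarith)
  have hmgf := sum_perm_exp_mul_card_filter_le S D L
  rw [exp_log (by linarith), add_sub_cancel_left] at hmgf
  calc (#{σ : Perm α | (1 + δ) * μ < X σ} : ℝ) ≤ #{σ : Perm α | L * ((1 + δ) * μ) ≤ L * X σ} := by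
        exact_mod_cast card_le_card
          (monotone_filter_right _ fun _ _ h => mul_le_mul_of_nonneg_left (le_of_lt h) hL)
    _ ≤ exp (-(L * ((1 + δ) * μ))) * ∑ σ : Perm α, exp (L * X σ) :=
        card_filter_le_apply_le_exp_neg_mul_sum_exp _ _ _
    _ ≤ exp (-(L * ((1 + δ) * μ))) * ((Fintype.card α).factorial * exp (δ * μ)) := by gcongr
    _ = (Fintype.card α).factorial * exp (μ * (δ - (1 + δ) * L)) := by
        rw [mul_left_comm, ← exp_add]; ring_nf
    _ ≤ (Fintype.card α).factorial * exp (-μ * δ ^ 2 / 3) := by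
        gcongr
        nlinarith [sub_one_add_mul_log_one_add_le h0 h1]

theorem card_perm_lower_tail_le (S D : Finset α) {δ : ℝ} (h0 : 0 ≤ δ) :
    (#{σ : Perm α | (#{t ∈ S | σ t ∈ D} : ℝ) < (1 - δ) * (#S * (#D / Fintype.card α))} : ℝ)
      ≤ (Fintype.card α).factorial * exp (-(#S * (#D / Fintype.card α)) * δ ^ 2 / 2) := by
  set μ : ℝ := #S * (#D / Fintype.card α)
  set X : Perm α → ℝ := fun σ => #{t ∈ S | σ t ∈ D}
  have hμ : 0 ≤ μ := by positivity
  have hmgf := sum_perm_exp_mul_card_filter_le S D (-δ)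
  calc (#{σ : Perm α | X σ < (1 - δ) * μ} : ℝ) ≤ #{σ : Perm α | -δ * ((1 - δ) * μ) ≤ -δ * X σ} := by
        exact_mod_cast card_le_card
          (monotone_filter_right _ fun _ _ h =>
            mul_le_mul_of_nonpos_left (le_of_lt h) (neg_nonpos.2 h0))
    _ ≤ exp (-(-δ * ((1 - δ) * μ))) * ∑ σ : Perm α, exp (-δ * X σ) :=
        card_filter_le_apply_le_exp_neg_mul_sum_exp _ _ _
    _ ≤ exp (-(-δ * ((1 - δ) * μ))) * ((Fintype.card α).factorial * exp ((exp (-δ) - 1) * μ)) := by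
        gcongr
    _ = (Fintype.card α).factorial * exp (μ * (exp (-δ) - 1 + δ - δ ^ 2)) := by
        rw [mul_left_comm, ← exp_add]; ring_nf
    _ ≤ (Fintype.card α).factorial * exp (-μ * δ ^ 2 / 2) := by
        gcongr
        nlinarith [exp_neg_le_one_sub_add_sq_div_two h0]

theorem card_perm_abs_sub_gt_le (S D : Finset α) {δ : ℝ} (h0 : 0 ≤ δ) (h1 : δ ≤ 1) :
    (#{σ : Perm α | δ * (#S * (#D / Fintype.card α))
        < |(#{t ∈ S | σ t ∈ D} : ℝ) - #S * (#D / Fintype.card α)|} : ℝ)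
      ≤ 2 * (Fintype.card α).factorial * exp (-(#S * (#D / Fintype.card α)) * δ ^ 2 / 3) := by
  set μ : ℝ := #S * (#D / Fintype.card α)
  set X : Perm α → ℝ := fun σ => #{t ∈ S | σ t ∈ D}
  have hμ : 0 ≤ μ := by positivity
  have hsub : ({σ : Perm α | δ * μ < |X σ - μ|} : Finset (Perm α))
      ⊆ ({σ : Perm α | (1 + δ) * μ < X σ} : Finset (Perm α))
        ∪ ({σ : Perm α | X σ < (1 - δ) * μ} : Finset (Perm α)) := by
    intro σ
    simp only [mem_filter, mem_univ, true_and, mem_union, lt_abs]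
    rintro (h | h)
    · left; linarith
    · right; linarith
  have hexp : exp (-μ * δ ^ 2 / 2) ≤ exp (-μ * δ ^ 2 / 3) :=
    exp_le_exp.2 (by nlinarith [mul_nonneg hμ (sq_nonneg δ)])
  calc (#{σ : Perm α | δ * μ < |X σ - μ|} : ℝ)
      ≤ #{σ : Perm α | (1 + δ) * μ < X σ} + #{σ : Perm α | X σ < (1 - δ) * μ} := by
        exact_mod_cast (card_le_card hsub).trans (card_union_le _ _)
    _ ≤ (Fintype.card α).factorial * exp (-μ * δ ^ 2 / 3)
          + (Fintype.card α).factorial * exp (-μ * δ ^ 2 / 2) :=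
        add_le_add (card_perm_upper_tail_le S D h0 h1) (card_perm_lower_tail_le S D h0)
    _ ≤ 2 * (Fintype.card α).factorial * exp (-μ * δ ^ 2 / 3) := by nlinarith

end

theorem card_fin_filter_le_val_and_val_lt {m a b : ℕ} (hb : b ≤ m) :
    #{y : Fin m | a ≤ (y : ℕ) ∧ (y : ℕ) < b} = b - a := by
  rw [← Nat.card_Ico, ← card_map Fin.valEmbedding]
  congr 1
  ext x
  simp only [mem_map, mem_filter, mem_univ, true_and, Fin.valEmbedding_apply, mem_Ico]
  exact ⟨by rintro ⟨y, hy, rfl⟩; exact hy, fun hx => ⟨⟨x, hx.2.trans_le hb⟩, hx, rfl⟩⟩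

theorem stmt_1_general (m κ : ℕ) (hm : 0 < m) (hdiv : 2 * κ ∣ m)
    (S : Finset (Fin m))
    (δ : ℝ) (hδ0 : 0 < δ) (hδ1 : δ ≤ 1)
    (k : ℕ) (hk1 : 1 ≤ k) (hkκ : k ≤ κ) :
    ((Finset.univ.filter (fun σ : Equiv.Perm (Fin m) =>
        δ * (S.card : ℝ) / (2 * κ) <
          |((S.filter (fun t =>
              m / 2 + (k - 1) * (m / (2 * κ)) ≤ (σ t : ℕ) ∧
                (σ t : ℕ) < m / 2 + k * (m / (2 * κ)))).card : ℝ)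
            - (S.card : ℝ) / (2 * κ)|)).card : ℝ)
      / (Fintype.card (Equiv.Perm (Fin m)) : ℝ)
      ≤ 2 * Real.exp (-((S.card : ℝ) * δ ^ 2) / (6 * κ)) := by
  obtain ⟨c, hmc⟩ := hdiv
  have hκ : 0 < κ := Nat.pos_of_ne_zero (by rintro rfl; simp [hmc] at hm)
  have hc : 0 < c := Nat.pos_of_ne_zero (by rintro rfl; simp [hmc] at hm)
  have : Nonempty (Fin m) := ⟨⟨0, hm⟩⟩
  have hchunk : m / (2 * κ) = c := by rw [hmc]; exact Nat.mul_div_cancel_left c (by positivity)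
  have hhalf : m / 2 = κ * c := by rw [hmc, mul_assoc]; exact Nat.mul_div_cancel_left _ two_pos
  set D : Finset (Fin m) :=
    {y | m / 2 + (k - 1) * (m / (2 * κ)) ≤ (y : ℕ) ∧ (y : ℕ) < m / 2 + k * (m / (2 * κ))}
  have hD : #D = c := by
    rw [card_fin_filter_le_val_and_val_lt (by rw [hchunk, hhalf, hmc]; nlinarith), hchunk, hhalf,
      Nat.add_sub_add_left, ← Nat.sub_mul, Nat.sub_sub_self hk1, one_mul]
  have hμ : (#S : ℝ) * (#D / Fintype.card (Fin m)) = #S / (2 * κ) := by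
    have hm' : (m : ℝ) = 2 * κ * c := by exact_mod_cast hmc
    rw [hD, Fintype.card_fin, hm']; field_simp
  have hexp : -(#S / (2 * κ) : ℝ) * δ ^ 2 / 3 = -(#S * δ ^ 2) / (6 * κ) := by
    field_simp; ring
  have hbound := card_perm_abs_sub_gt_le S D hδ0.le hδ1
  rw [hμ, hexp, ← mul_div_assoc, Fintype.card_fin] at hbound
  rw [Fintype.card_perm, Fintype.card_fin, div_le_iff₀ (by positivity)]
  simp only [D, mem_filter, mem_univ, true_and] at hbound
  exact hbound.trans_eq (by ring)

/-- For `m, κ` positive integers with `2κ ∣ m`, `S` a nonempty subset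
of `Fin m`, `δ ∈ (0,1]`, and `k ∈ {1,…,κ}`, let `C_k` be the `k`-th chunk of the
second half, i.e. positions `t` with `m/2 + (k−1)·m/(2κ) ≤ t < m/2 + k·m/(2κ)`.
For a uniformly random permutation `σ` of `Fin m`, the number `X_k` of elements of
`S` whose image under `σ` lands in `C_k` deviates from `|S|/(2κ)` by more than
`δ·|S|/(2κ)` with probability at most `2·exp(−|S|·δ²/(6κ))`. -/
theorem stmt_1 (m κ : ℕ) (hm : 0 < m) (hκ : 0 < κ) (hdiv : 2 * κ ∣ m)
    (S : Finset (Fin m)) (hS : S.Nonempty)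
    (δ : ℝ) (hδ0 : 0 < δ) (hδ1 : δ ≤ 1)
    (k : ℕ) (hk1 : 1 ≤ k) (hkκ : k ≤ κ) :
    ((Finset.univ.filter (fun σ : Equiv.Perm (Fin m) =>
        δ * (S.card : ℝ) / (2 * κ) <
          |((S.filter (fun t =>
              m / 2 + (k - 1) * (m / (2 * κ)) ≤ (σ t : ℕ) ∧
                (σ t : ℕ) < m / 2 + k * (m / (2 * κ)))).card : ℝ)
            - (S.card : ℝ) / (2 * κ)|)).card : ℝ)
      / (Fintype.card (Equiv.Perm (Fin m)) : ℝ)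
      ≤ 2 * Real.exp (-((S.card : ℝ) * δ ^ 2) / (6 * κ)) :=
  stmt_1_general m κ hm hdiv S δ hδ0 hδ1 k hk1 hkκ
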